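/- Let n ∈ ℕ with n ≥ 3 and let k ∈ ℕ with 2 ≤ k ≤ n. For the standard (1+1) EA with mutation rate χ = 1/n on BinVal, the expected number of iterations until the first k bits are all set to 1 satisfies E[T_k] ≤ 4e·n·(1 + ln(2k)); in particular E[T_k] = O(n log k). -/

import Mathlib

open scoped BigOperators ENNReal

noncomputable section

/-- `BinVal` on bit strings of length `n`: index `0` (bit number `1`) is the most
significant bit, with weight `2 ^ (n - 1 - i)`. -/
def binVal (n : ℕ) (x : Fin n → Bool) : ℕ :=
  ∑ i : Fin n, if x i then 2 ^ (n - 1 - (i : ℕ)) else 0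

/-- Probability that standard bit mutation with rate `χ` turns `x` into `y`. -/
def flipProb (n : ℕ) (χ : ℝ) (x y : Fin n → Bool) : ℝ :=
  ∏ i : Fin n, if x i = y i then 1 - χ else χ

/-- Elitist selection of the (1+1) EA on BinVal. -/
def select (n : ℕ) (x y : Fin n → Bool) : Fin n → Bool :=
  if binVal n x ≤ binVal n y then y else x

/-- Transition kernel of the (1+1) EA with fixed mutation rate `χ` on BinVal. -/
def stepKer (n : ℕ) (χ : ℝ) (x x' : Fin n → Bool) : ℝ≥0∞ :=
  ∑ y : Fin n → Bool,
    ENNReal.ofReal (flipProb n χ x y) * (if select n x y = x' then 1 else 0)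

/-- `alive init step A t s` is the probability that the Markov chain with initial
distribution `init` and transition kernel `step` is in state `s` at time `t` and
has not yet visited the target set `A` (so `∑' s, alive init step A t s = P(T > t)`
for the first hitting time `T` of `A`). -/
def alive {σ : Type*} (init : σ → ℝ≥0∞) (step : σ → σ → ℝ≥0∞) (A : Set σ) :
    ℕ → σ → ℝ≥0∞
  | 0 => Aᶜ.indicator init
  | t + 1 => Aᶜ.indicator (fun s' => ∑' s, alive init step A t s * step s s')

/-- Expected first hitting time `E[T] = ∑_{t ≥ 0} P(T > t)` of the target set `A`
for the Markov chain given by `init` and `step`. -/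
def hitTimeExp {σ : Type*} (init : σ → ℝ≥0∞) (step : σ → σ → ℝ≥0∞) (A : Set σ) : ℝ≥0∞ :=
  ∑' t : ℕ, ∑' s : σ, alive init step A t s

/-- Target set: the first `k` bits are all `1`. -/
def firstKOnes (n k : ℕ) : Set (Fin n → Bool) :=
  {x | ∀ i : Fin n, (i : ℕ) < k → x i = true}

/-- Uniform initial distribution on `{0,1}^n`. -/
def uniformInit (n : ℕ) : (Fin n → Bool) → ℝ≥0∞ := fun _ => (2 : ℝ≥0∞)⁻¹ ^ n

/-!
Drift analysis with the potential `g x = ∑_{i < k, x i = 0} (1 + 2χ) ^ (k - 1 - i)`. Whether an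
offspring is accepted is decided by the first bit it flips: if that bit is a zero of the prefix it
gets fixed, and the later prefix bits flipped along with it cost, in expectation, at most half of
its weight. Hence `E[g x_{t+1} | x_t] ≤ (1 - χ (1 - χ) ^ (n - 1) / 2) g x_t ≤ (1 - 1/(2en)) g x_t`,
while `1 ≤ g ≤ k e²` before the target is hit, and the multiplicative drift theorem gives
`E[T_k] ≤ 2en (1 + ln (k e²)) + 1`.
-/

open Finset

section BinVal

variable {ι M : Type*} [Fintype ι] [LinearOrder ι] [AddCommMonoid M]

lemma sum_univ_eq_sum_lt_add_add_sum_gt (f : ι → M) (m : ι) :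
    ∑ i, f i = ∑ i with i < m, f i + (f m + ∑ i with m < i, f i) := by
  rw [← sum_filter_add_sum_filter_not univ (· < m)]
  simp only [not_lt]
  have h : univ.filter (m ≤ ·) = insert m (univ.filter (m < ·)) := by
    ext i
    simp [le_iff_eq_or_lt, eq_comm]
  rw [h, sum_insert (by simp)]

variable {n : ℕ}

lemma sum_bits_after_lt_two_pow (b : Fin n → Bool) (m : Fin n) :
    ∑ i with m < i, (if b i then 2 ^ (n - 1 - (i : ℕ)) else 0) < 2 ^ (n - 1 - (m : ℕ)) := by
  have hinj : Set.InjOn (fun i : Fin n => n - 1 - (i : ℕ)) {i | m < i} := by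
    intro i hi j hj hij
    have := i.isLt; have := j.isLt
    simp only [Set.mem_ofPred_eq, Fin.lt_def] at hi hj hij
    exact Fin.ext (by omega)
  calc ∑ i with m < i, (if b i then 2 ^ (n - 1 - (i : ℕ)) else 0)
      ≤ ∑ i with m < i, 2 ^ (n - 1 - (i : ℕ)) := sum_le_sum fun i _ => by split <;> simp
    _ = ∑ e ∈ image (fun i : Fin n => n - 1 - (i : ℕ)) {i | m < i}, 2 ^ e :=
        (sum_image fun i hi j hj => hinj (by simpa using hi) (by simpa using hj)).symm
    _ < 2 ^ (n - 1 - (m : ℕ)) := by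
        refine Nat.geomSum_lt le_rfl fun e he => ?_
        obtain ⟨i, hi, rfl⟩ := mem_image.mp he
        have := i.isLt
        simp only [mem_filter, mem_univ, true_and, Fin.lt_def] at hi
        omega

lemma binVal_lt_binVal {x y : Fin n → Bool} {m : Fin n} (hx : x m = false) (hy : y m = true)
    (hpre : ∀ j < m, x j = y j) : binVal n x < binVal n y := by
  rw [binVal, binVal, sum_univ_eq_sum_lt_add_add_sum_gt _ m, sum_univ_eq_sum_lt_add_add_sum_gt _ m,
    sum_congr rfl fun j hj => by rw [hpre j (by simpa using hj)]]
  have := sum_bits_after_lt_two_pow x m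
  simp only [hx, hy, Bool.false_eq_true, if_false, if_true]
  omega

lemma select_eq_of_first_flip {x y : Fin n → Bool} {m : Fin n} (hm : y m ≠ x m)
    (hpre : ∀ j < m, y j = x j) : select n x y = if x m then x else y := by
  cases hxm : x m
  · have hym : y m = true := by simpa [hxm] using hm
    rw [select, if_pos (binVal_lt_binVal hxm hym fun j hj => (hpre j hj).symm).le, if_neg (by simp)]
  · have hym : y m = false := by simpa [hxm] using hm
    rw [select, if_neg (binVal_lt_binVal hym hxm hpre).not_ge, if_pos rfl]

lemma select_self (x : Fin n → Bool) : select n x x = x := by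
  simp [select]

end BinVal

section Mutation

variable {n : ℕ} {χ : ℝ}

lemma flipProb_nonneg (hχ0 : 0 ≤ χ) (hχ1 : χ ≤ 1) (x y : Fin n → Bool) :
    0 ≤ flipProb n χ x y :=
  prod_nonneg fun i _ => by split <;> linarith

lemma sum_flipProb_mul_prod (x : Fin n → Bool) (φ : Fin n → Bool → ℝ) :
    ∑ y, flipProb n χ x y * ∏ i, φ i (y i) = ∏ i, ((1 - χ) * φ i (x i) + χ * φ i (!x i)) := by
  simp_rw [flipProb, ← prod_mul_distrib]
  rw [← Fintype.prod_sum fun i b => (if x i = b then 1 - χ else χ) * φ i b]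
  refine prod_congr rfl fun i _ => ?_
  cases x i <;> simp [add_comm]

lemma sum_flipProb (x : Fin n → Bool) : ∑ y, flipProb n χ x y = 1 := by
  simpa using sum_flipProb_mul_prod (χ := χ) x fun _ _ => 1

lemma sum_flipProb_mul_agree_mul_flip (x : Fin n → Bool) {S T : Finset (Fin n)}
    (hST : Disjoint S T) :
    ∑ y, flipProb n χ x y *
        ((∏ i ∈ S, if y i = x i then 1 else 0) * ∏ i ∈ T, if y i = x i then 0 else 1) =
      (1 - χ) ^ #S * χ ^ #T := by
  have hind (y : Fin n → Bool) :
      (∏ i ∈ S, if y i = x i then (1 : ℝ) else 0) * (∏ i ∈ T, if y i = x i then 0 else 1) =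
        ∏ i, (if i ∈ S then if y i = x i then 1 else 0 else 1) *
          if i ∈ T then if y i = x i then 0 else 1 else 1 := by
    rw [prod_mul_distrib, prod_ite_mem, prod_ite_mem, univ_inter, univ_inter]
  simp_rw [hind]
  rw [sum_flipProb_mul_prod x fun i b =>
    (if i ∈ S then if b = x i then 1 else 0 else 1) * if i ∈ T then if b = x i then 0 else 1 else 1]
  have hcoord (i : Fin n) :
      (1 - χ) * ((if i ∈ S then if x i = x i then 1 else 0 else 1) *
          if i ∈ T then if x i = x i then 0 else 1 else 1) +
        χ * ((if i ∈ S then if (!x i) = x i then 1 else 0 else 1) *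
          if i ∈ T then if (!x i) = x i then 0 else 1 else 1) =
      (if i ∈ S then 1 - χ else 1) * if i ∈ T then χ else 1 := by
    by_cases hS : i ∈ S <;> by_cases hT : i ∈ T
    · exact absurd hT (disjoint_left.mp hST hS)
    all_goals simp [hS, hT]
  rw [prod_congr rfl fun i _ => hcoord i, prod_mul_distrib, prod_ite_mem, prod_ite_mem,
    univ_inter, univ_inter, prod_const, prod_const]

end Mutation

section FirstFlip

variable {n : ℕ} {χ : ℝ}

def firstFlipInd (x y : Fin n → Bool) (m : Fin n) : ℝ :=
  (∏ i ∈ Iio m, if y i = x i then 1 else 0) * if y m = x m then 0 else 1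

lemma firstFlipInd_eq_of_first_flip {x y : Fin n → Bool} {m₀ : Fin n} (hm₀ : y m₀ ≠ x m₀)
    (hpre : ∀ j < m₀, y j = x j) (m : Fin n) :
    firstFlipInd x y m = if m = m₀ then 1 else 0 := by
  rcases lt_trichotomy m m₀ with h | rfl | h
  · simp [firstFlipInd, hpre m h, h.ne]
  · simpa [firstFlipInd, prod_boole, hm₀] using hpre
  · rw [firstFlipInd, prod_eq_zero (mem_Iio.mpr h) (if_neg hm₀), zero_mul, if_neg h.ne']

lemma firstFlipInd_self (x : Fin n → Bool) (m : Fin n) : firstFlipInd x x m = 0 := by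
  simp [firstFlipInd]

lemma sum_flipProb_mul_firstFlipInd (x : Fin n → Bool) (m : Fin n) :
    ∑ y, flipProb n χ x y * firstFlipInd x y m = (1 - χ) ^ (m : ℕ) * χ := by
  have h := sum_flipProb_mul_agree_mul_flip (χ := χ) x
    (disjoint_singleton_right.mpr (notMem_Iio_self (b := m)))
  simp only [prod_singleton, card_singleton, Fin.card_Iio, pow_one] at h
  exact h

lemma sum_flipProb_mul_firstFlipInd_mul_flip (x : Fin n → Bool) {m j : Fin n} (hmj : m < j) :
    ∑ y, flipProb n χ x y * (firstFlipInd x y m * if y j = x j then 0 else 1) =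
      (1 - χ) ^ (m : ℕ) * χ ^ 2 := by
  have hdisj : Disjoint (Iio m) {m, j} := by
    simp [hmj.not_gt]
  have h := sum_flipProb_mul_agree_mul_flip (χ := χ) x hdisj
  simp only [prod_pair hmj.ne, card_pair hmj.ne, Fin.card_Iio] at h
  simpa only [firstFlipInd, mul_assoc] using h

end FirstFlip

section Potential

variable {n : ℕ} (k : ℕ) (χ : ℝ)

/-- The factor `1 + 2χ` makes `χ` times the total weight of the bits after `i` at most half the
weight of bit `i`, so that fixing bit `i` outweighs the expected damage done behind it. -/
def weight (i : ℕ) : ℝ := (1 + 2 * χ) ^ (k - 1 - i)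

def prefixZeros (x : Fin n → Bool) : Finset (Fin n) := {i | (i : ℕ) < k ∧ x i = false}

def potential (x : Fin n → Bool) : ℝ := ∑ i ∈ prefixZeros k x, weight k χ i

def laterPrefix (m : Fin n) : Finset (Fin n) := {j | m < j ∧ (j : ℕ) < k}

variable {k χ}

lemma one_le_weight (hχ : 0 ≤ χ) (i : ℕ) : 1 ≤ weight k χ i :=
  one_le_pow₀ (by linarith)

lemma weight_le (hχ : 0 ≤ χ) (i : ℕ) : weight k χ i ≤ (1 + 2 * χ) ^ k :=
  pow_le_pow_right₀ (by linarith) (by omega)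

lemma potential_nonneg (hχ : 0 ≤ χ) (x : Fin n → Bool) : 0 ≤ potential k χ x :=
  sum_nonneg fun i _ => (zero_le_one.trans (one_le_weight hχ i))

lemma one_le_potential (hχ : 0 ≤ χ) {x : Fin n → Bool} (hx : x ∉ firstKOnes n k) :
    1 ≤ potential k χ x := by
  simp only [firstKOnes, Set.mem_ofPred_eq, not_forall, Bool.not_eq_true] at hx
  obtain ⟨i, hik, hxi⟩ := hx
  have hi : i ∈ prefixZeros k x := by simp [prefixZeros, hik, hxi]
  exact (one_le_weight hχ i).trans (single_le_sum (f := fun j : Fin n => weight k χ j)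
    (fun j _ => zero_le_one.trans (one_le_weight hχ j)) hi)

lemma potential_le (hχ : 0 ≤ χ) (x : Fin n → Bool) : potential k χ x ≤ k * (1 + 2 * χ) ^ k := by
  have hcard : #(prefixZeros k x) ≤ k := by
    rw [← card_map Fin.valEmbedding]
    refine (card_le_card fun i hi => ?_).trans_eq (card_range k)
    obtain ⟨j, hj, rfl⟩ := mem_map.mp hi
    simp only [prefixZeros, mem_filter] at hj
    exact mem_range.mpr hj.2.1
  calc potential k χ x ≤ #(prefixZeros k x) * (1 + 2 * χ) ^ k :=
        (sum_le_card_nsmul (prefixZeros k x) _ _ fun i _ => weight_le hχ i).trans_eq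
          (nsmul_eq_mul _ _)
    _ ≤ k * (1 + 2 * χ) ^ k := by gcongr

lemma two_mul_mul_sum_weight_Ico_eq {m : ℕ} (hmk : m < k) :
    2 * χ * ∑ j ∈ Ico (m + 1) k, weight k χ j = weight k χ m - 1 := by
  have hreflect := sum_Ico_reflect (fun j => (1 + 2 * χ) ^ j) (m + 1) (m := k) (n := k - 1)
    (by omega)
  rw [show k - 1 + 1 - k = 0 by omega, show k - 1 + 1 - (m + 1) = k - 1 - m by omega,
    ← range_eq_Ico] at hreflect
  have hgeom := geom_sum_mul (1 + 2 * χ) (k - 1 - m)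
  simp only [weight, hreflect] at hgeom ⊢
  linear_combination hgeom

lemma mul_sum_laterPrefix_weight_le (hχ : 0 ≤ χ) {m : Fin n} (hmk : (m : ℕ) < k) :
    χ * ∑ j ∈ laterPrefix k m, weight k χ j ≤ weight k χ m / 2 := by
  have hsub : (laterPrefix k m).map Fin.valEmbedding ⊆ Ico ((m : ℕ) + 1) k := by
    intro j hj
    obtain ⟨i, hi, rfl⟩ := mem_map.mp hj
    simp only [laterPrefix, mem_filter, Fin.lt_def] at hi
    simp only [Fin.valEmbedding_apply, mem_Ico]
    omega
  have hle : ∑ j ∈ laterPrefix k m, weight k χ j ≤ ∑ j ∈ Ico ((m : ℕ) + 1) k, weight k χ j :=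
    (sum_map _ Fin.valEmbedding fun j => weight k χ j).symm.trans_le
      (sum_le_sum_of_subset_of_nonneg hsub fun j _ _ => zero_le_one.trans (one_le_weight hχ j))
  nlinarith [two_mul_mul_sum_weight_Ico_eq (χ := χ) hmk]

end Potential

section Drift

variable {n k : ℕ} {χ : ℝ}

variable (k χ) in
def gain (x y : Fin n → Bool) (m : Fin n) : ℝ :=
  weight k χ m - ∑ j ∈ laterPrefix k m, (if y j = x j then 0 else 1) * weight k χ j

lemma prefixZeros_congr {x y : Fin n → Bool} (h : ∀ i : Fin n, (i : ℕ) < k → y i = x i) :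
    prefixZeros k y = prefixZeros k x := by
  ext i
  simp only [prefixZeros, mem_filter, mem_univ, true_and]
  exact and_congr_right fun hik => by rw [h i hik]

lemma potential_le_sub_gain (hχ : 0 ≤ χ) {x y : Fin n → Bool} {m : Fin n} (hm : y m ≠ x m)
    (hpre : ∀ j < m, y j = x j) (hmZ : m ∈ prefixZeros k x) :
    potential k χ y ≤ potential k χ x - gain k χ x y m := by
  have hym : y m = true := by simpa [(mem_filter.mp hmZ).2.2] using hm
  have hsub : prefixZeros k y ⊆
      (prefixZeros k x).erase m ∪ (laterPrefix k m).filter (fun j => y j ≠ x j) := by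
    intro i hi
    simp only [prefixZeros, mem_filter, mem_univ, true_and] at hi
    simp only [prefixZeros, laterPrefix, mem_union, mem_erase, mem_filter, mem_univ, true_and]
    rcases lt_trichotomy i m with h | rfl | h
    · exact Or.inl ⟨h.ne, hi.1, hpre i h ▸ hi.2⟩
    · simp [hym] at hi
    · by_cases hyx : y i = x i
      · exact Or.inl ⟨h.ne', hi.1, hyx ▸ hi.2⟩
      · exact Or.inr ⟨⟨h, hi.1⟩, hyx⟩
  have hw (i : ℕ) : 0 ≤ weight k χ i := zero_le_one.trans (one_le_weight hχ i)
  calc potential k χ y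
      ≤ ∑ i ∈ (prefixZeros k x).erase m ∪ (laterPrefix k m).filter (fun j => y j ≠ x j),
          weight k χ i := sum_le_sum_of_subset_of_nonneg hsub fun i _ _ => hw i
    _ ≤ ∑ i ∈ (prefixZeros k x).erase m, weight k χ i +
          ∑ i ∈ (laterPrefix k m).filter (fun j => y j ≠ x j), weight k χ i := by
        rw [← sum_union_inter]
        exact le_add_of_nonneg_right (sum_nonneg fun i _ => hw i)
    _ = potential k χ x - gain k χ x y m := by
        rw [potential, ← add_sum_erase _ _ hmZ, gain, sum_filter]
        simp only [ite_not, ite_mul, zero_mul, one_mul]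
        ring

lemma potential_select_le_of_first_flip (hχ : 0 ≤ χ) {x y : Fin n → Bool} {m : Fin n}
    (hm : y m ≠ x m) (hpre : ∀ j < m, y j = x j) :
    potential k χ (select n x y) ≤
      potential k χ x - if m ∈ prefixZeros k x then gain k χ x y m else 0 := by
  rw [select_eq_of_first_flip hm hpre]
  split_ifs with hxm hmZ hmZ
  · simp [prefixZeros, hxm] at hmZ
  · rw [sub_zero]
  · exact potential_le_sub_gain hχ hm hpre hmZ
  · have hkm : k ≤ (m : ℕ) := by
      by_contra hmk
      exact hmZ (by simpa [prefixZeros, not_le.mp hmk] using hxm)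
    rw [sub_zero, potential, potential,
      prefixZeros_congr fun i hik => hpre i (Fin.lt_def.mpr (by omega))]

lemma potential_select_le (hχ : 0 ≤ χ) (x y : Fin n → Bool) :
    potential k χ (select n x y) ≤
      potential k χ x - ∑ m ∈ prefixZeros k x, firstFlipInd x y m * gain k χ x y m := by
  by_cases hyx : y = x
  · subst hyx
    simp [select_self, firstFlipInd_self]
  obtain ⟨i, hi⟩ : ∃ i, y i ≠ x i := by simpa [funext_iff] using hyx
  obtain ⟨m₀, hm₀, hmin⟩ := (univ.filter fun i => y i ≠ x i).exists_min_image id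
    ⟨i, by simpa using hi⟩
  have hm₀' : y m₀ ≠ x m₀ := by simpa using hm₀
  have hpre : ∀ j < m₀, y j = x j := fun j hj => by
    by_contra h
    exact (hmin j (by simpa using h)).not_gt hj
  simp_rw [firstFlipInd_eq_of_first_flip hm₀' hpre, ite_mul, one_mul, zero_mul, sum_ite_eq']
  exact potential_select_le_of_first_flip hχ hm₀' hpre

lemma sum_flipProb_mul_firstFlipInd_mul_gain (x : Fin n → Bool) (m : Fin n) :
    ∑ y, flipProb n χ x y * (firstFlipInd x y m * gain k χ x y m) =
      (1 - χ) ^ (m : ℕ) * χ * (weight k χ m - χ * ∑ j ∈ laterPrefix k m, weight k χ j) := by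
  have hsplit (y : Fin n → Bool) :
      flipProb n χ x y * (firstFlipInd x y m * gain k χ x y m) =
        flipProb n χ x y * firstFlipInd x y m * weight k χ m -
          ∑ j ∈ laterPrefix k m,
            flipProb n χ x y * (firstFlipInd x y m * if y j = x j then 0 else 1) *
              weight k χ j := by
    simp only [gain, mul_sub, mul_sum]
    congr 1 <;> [ring; exact sum_congr rfl fun j _ => by ring]
  simp_rw [hsplit, sum_sub_distrib, ← sum_mul, sum_flipProb_mul_firstFlipInd]
  rw [sum_comm, sum_congr rfl fun j hj => by
    rw [← sum_mul, sum_flipProb_mul_firstFlipInd_mul_flip x (mem_filter.mp hj).2.1], ← mul_sum]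
  ring

lemma sum_flipProb_mul_potential_select_le (hχ0 : 0 ≤ χ) (hχ1 : χ ≤ 1) (x : Fin n → Bool) :
    ∑ y, flipProb n χ x y * potential k χ (select n x y) ≤
      (1 - χ * (1 - χ) ^ (n - 1) / 2) * potential k χ x := by
  have hterm (m : Fin n) (hm : m ∈ prefixZeros k x) :
      χ * (1 - χ) ^ (n - 1) / 2 * weight k χ m ≤
        (1 - χ) ^ (m : ℕ) * χ * (weight k χ m - χ * ∑ j ∈ laterPrefix k m, weight k χ j) := by
    have hmk : (m : ℕ) < k := (mem_filter.mp hm).2.1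
    have hpow : (1 - χ) ^ (n - 1) ≤ (1 - χ) ^ (m : ℕ) :=
      pow_le_pow_of_le_one (by linarith) (by linarith) (by omega)
    have hhalf := mul_sum_laterPrefix_weight_le hχ0 hmk
    have hw := one_le_weight (k := k) hχ0 m
    have hχpow : 0 ≤ χ * (1 - χ) ^ (m : ℕ) := mul_nonneg hχ0 (pow_nonneg (by linarith) _)
    nlinarith [mul_le_mul_of_nonneg_left hpow hχ0]
  calc ∑ y, flipProb n χ x y * potential k χ (select n x y)
      ≤ ∑ y, flipProb n χ x y *
          (potential k χ x - ∑ m ∈ prefixZeros k x, firstFlipInd x y m * gain k χ x y m) :=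
        sum_le_sum fun y _ => mul_le_mul_of_nonneg_left (potential_select_le hχ0 x y)
          (flipProb_nonneg hχ0 hχ1 x y)
    _ = potential k χ x - ∑ m ∈ prefixZeros k x,
          (1 - χ) ^ (m : ℕ) * χ * (weight k χ m - χ * ∑ j ∈ laterPrefix k m, weight k χ j) := by
        rw [← sum_congr rfl fun m _ => sum_flipProb_mul_firstFlipInd_mul_gain x m, sum_comm]
        simp only [mul_sub, sum_sub_distrib, ← sum_mul, sum_flipProb, one_mul, mul_sum]
    _ ≤ potential k χ x - ∑ m ∈ prefixZeros k x, χ * (1 - χ) ^ (n - 1) / 2 * weight k χ m :=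
        sub_le_sub_left (sum_le_sum hterm) _
    _ = (1 - χ * (1 - χ) ^ (n - 1) / 2) * potential k χ x := by
        rw [← mul_sum, potential]
        ring

end Drift

section Kernel

variable {n : ℕ} {χ : ℝ}

lemma sum_stepKer_mul (x : Fin n → Bool) (F : (Fin n → Bool) → ℝ≥0∞) :
    ∑ x', stepKer n χ x x' * F x' = ∑ y, ENNReal.ofReal (flipProb n χ x y) * F (select n x y) := by
  simp only [stepKer, sum_mul, ite_mul, zero_mul, mul_ite, mul_zero]
  rw [sum_comm]
  simp [mul_comm]

lemma sum_stepKer (hχ0 : 0 ≤ χ) (hχ1 : χ ≤ 1) (x : Fin n → Bool) : ∑ x', stepKer n χ x x' = 1 := by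
  simpa [← ENNReal.ofReal_sum_of_nonneg fun y _ => flipProb_nonneg hχ0 hχ1 x y, sum_flipProb]
    using sum_stepKer_mul (χ := χ) x fun _ => 1

lemma sum_stepKer_mul_potential_le {k : ℕ} (hχ0 : 0 ≤ χ) (hχ1 : χ ≤ 1) (x : Fin n → Bool) :
    ∑ x', stepKer n χ x x' * ENNReal.ofReal (potential k χ x') ≤
      ENNReal.ofReal (1 - χ * (1 - χ) ^ (n - 1) / 2) * ENNReal.ofReal (potential k χ x) := by
  have hp := flipProb_nonneg hχ0 hχ1 x
  rw [sum_stepKer_mul, ← ENNReal.ofReal_mul' (potential_nonneg hχ0 x)]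
  simp_rw [← ENNReal.ofReal_mul (hp _)]
  rw [← ENNReal.ofReal_sum_of_nonneg fun y _ => mul_nonneg (hp y) (potential_nonneg hχ0 _)]
  exact ENNReal.ofReal_le_ofReal (sum_flipProb_mul_potential_select_le hχ0 hχ1 x)

lemma sum_uniformInit (n : ℕ) : ∑ x, uniformInit n x = 1 := by
  simp [uniformInit, ← ENNReal.inv_pow, ENNReal.mul_inv_cancel]

end Kernel

section HittingTime

variable {σ : Type*} {init : σ → ℝ≥0∞} {step : σ → σ → ℝ≥0∞} {A : Set σ}

lemma alive_eq_zero_of_mem {s : σ} (hs : s ∈ A) (t : ℕ) : alive init step A t s = 0 := by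
  cases t <;> exact Set.indicator_of_notMem (Set.notMem_compl_iff.mpr hs) _

variable [Fintype σ]

lemma sum_alive_succ_mul_le (f : σ → ℝ≥0∞) (t : ℕ) :
    ∑ s', alive init step A (t + 1) s' * f s' ≤
      ∑ s, alive init step A t s * ∑ s', step s s' * f s' := by
  calc ∑ s', alive init step A (t + 1) s' * f s'
      ≤ ∑ s', (∑ s, alive init step A t s * step s s') * f s' := by
        gcongr with s'
        exact (Set.indicator_le_self _ _ s').trans_eq (tsum_fintype _)
    _ = ∑ s, alive init step A t s * ∑ s', step s s' * f s' := by
        simp_rw [sum_mul, mul_sum, mul_assoc]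
        exact sum_comm

lemma sum_alive_le_one (hinit : ∑ s, init s ≤ 1) (hstep : ∀ s, ∑ s', step s s' ≤ 1) (t : ℕ) :
    ∑ s, alive init step A t s ≤ 1 := by
  induction t with
  | zero => exact (sum_le_sum fun s _ => Set.indicator_le_self _ _ s).trans hinit
  | succ t ih =>
    calc ∑ s, alive init step A (t + 1) s
        = ∑ s', alive init step A (t + 1) s' * 1 := by simp
      _ ≤ ∑ s, alive init step A t s * ∑ s', step s s' * 1 := sum_alive_succ_mul_le _ t
      _ ≤ ∑ s, alive init step A t s := by
        simp only [mul_one]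
        exact sum_le_sum fun s _ => mul_le_of_le_one_right' (hstep s)
      _ ≤ 1 := ih

lemma sum_alive_mul_le {g : σ → ℝ≥0∞} {r : ℝ≥0∞}
    (hdrift : ∀ s ∉ A, ∑ s', step s s' * g s' ≤ r * g s) (t : ℕ) :
    ∑ s, alive init step A t s * g s ≤ r ^ t * ∑ s, init s * g s := by
  induction t with
  | zero =>
    rw [pow_zero, one_mul]
    exact sum_le_sum fun s _ => mul_le_mul_left (Set.indicator_le_self Aᶜ init s) (g s)
  | succ t ih =>
    calc ∑ s', alive init step A (t + 1) s' * g s'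
        ≤ ∑ s, alive init step A t s * ∑ s', step s s' * g s' := sum_alive_succ_mul_le g t
      _ ≤ ∑ s, alive init step A t s * (r * g s) := by
        refine sum_le_sum fun s _ => ?_
        by_cases hs : s ∈ A
        · simp [alive_eq_zero_of_mem hs]
        · exact mul_le_mul_right (hdrift s hs) _
      _ = r * ∑ s, alive init step A t s * g s := by
        rw [mul_sum]
        exact sum_congr rfl fun s _ => by ring
      _ ≤ r ^ (t + 1) * ∑ s, init s * g s := by
        rw [pow_succ', mul_assoc]
        exact mul_le_mul_right ih r

lemma sum_alive_le_sum_alive_mul {g : σ → ℝ≥0∞} (hg : ∀ s ∉ A, 1 ≤ g s) (t : ℕ) :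
    ∑ s, alive init step A t s ≤ ∑ s, alive init step A t s * g s := by
  refine sum_le_sum fun s _ => ?_
  by_cases hs : s ∈ A
  · simp [alive_eq_zero_of_mem hs]
  · exact le_mul_of_one_le_right' (hg s hs)

lemma hitTimeExp_le_of_drift {g : σ → ℝ≥0∞} {r : ℝ≥0∞} (hinit : ∑ s, init s ≤ 1)
    (hstep : ∀ s, ∑ s', step s s' ≤ 1) (hg : ∀ s ∉ A, 1 ≤ g s)
    (hdrift : ∀ s ∉ A, ∑ s', step s s' * g s' ≤ r * g s) (t₀ : ℕ) :
    hitTimeExp init step A ≤ t₀ + r ^ t₀ * (∑ s, init s * g s) * (1 - r)⁻¹ := by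
  have htail (t : ℕ) : ∑ s, alive init step A t s ≤ r ^ t * ∑ s, init s * g s :=
    (sum_alive_le_sum_alive_mul hg t).trans (sum_alive_mul_le hdrift t)
  calc hitTimeExp init step A
      = ∑ t ∈ range t₀, ∑ s, alive init step A t s + ∑' t, ∑ s, alive init step A (t + t₀) s := by
        simp_rw [hitTimeExp, tsum_fintype]
        exact (ENNReal.summable.sum_add_tsum_nat_add' ..).symm
    _ ≤ ∑ t ∈ range t₀, 1 + ∑' t, r ^ (t + t₀) * ∑ s, init s * g s :=
        add_le_add (sum_le_sum fun t _ => sum_alive_le_one hinit hstep t)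
          (ENNReal.tsum_le_tsum fun t => htail (t + t₀))
    _ = t₀ + r ^ t₀ * (∑ s, init s * g s) * (1 - r)⁻¹ := by
        simp_rw [pow_add, mul_comm _ (r ^ t₀), mul_assoc, ENNReal.tsum_mul_left,
          ENNReal.tsum_mul_right, ENNReal.tsum_geometric]
        simp [mul_comm]

lemma hitTimeExp_le_of_multiplicative_drift {g : σ → ℝ≥0∞} {δ M : ℝ} (hδ0 : 0 < δ) (hδ1 : δ ≤ 1)
    (hM : 1 ≤ M) (hinit : ∑ s, init s ≤ 1) (hstep : ∀ s, ∑ s', step s s' ≤ 1)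
    (hg : ∀ s ∉ A, 1 ≤ g s) (hgM : ∑ s, init s * g s ≤ ENNReal.ofReal M)
    (hdrift : ∀ s ∉ A, ∑ s', step s s' * g s' ≤ ENNReal.ofReal (1 - δ) * g s) :
    hitTimeExp init step A ≤ ENNReal.ofReal ((1 + Real.log M) / δ + 1) := by
  set t₀ := ⌈Real.log M / δ⌉₊
  have hδ' : 0 ≤ 1 - δ := sub_nonneg.mpr hδ1
  have hdecay : (1 - δ) ^ t₀ * M ≤ 1 := by
    have hlog : Real.log M ≤ t₀ * δ := (div_le_iff₀ hδ0).mp (Nat.le_ceil _)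
    calc (1 - δ) ^ t₀ * M ≤ Real.exp (-δ) ^ t₀ * M := by
          gcongr
          exact Real.one_sub_le_exp_neg δ
      _ = Real.exp (-(t₀ * δ)) * Real.exp (Real.log M) := by
          rw [← Real.exp_nat_mul, Real.exp_log (by linarith)]
          ring_nf
      _ ≤ Real.exp (-Real.log M) * Real.exp (Real.log M) := by gcongr
      _ = 1 := by rw [← Real.exp_add, neg_add_cancel, Real.exp_zero]
  have hgap : 1 - ENNReal.ofReal (1 - δ) = ENNReal.ofReal δ := by
    rw [← ENNReal.ofReal_one, ← ENNReal.ofReal_sub _ hδ', sub_sub_cancel]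
  calc hitTimeExp init step A
      ≤ t₀ + ENNReal.ofReal (1 - δ) ^ t₀ * (∑ s, init s * g s) * (1 - ENNReal.ofReal (1 - δ))⁻¹ :=
        hitTimeExp_le_of_drift hinit hstep hg hdrift t₀
    _ ≤ ENNReal.ofReal t₀ + ENNReal.ofReal ((1 - δ) ^ t₀ * M) * ENNReal.ofReal δ⁻¹ := by
        rw [hgap, ENNReal.ofReal_natCast, ENNReal.ofReal_mul (pow_nonneg hδ' _),
          ENNReal.ofReal_pow hδ', ENNReal.ofReal_inv_of_pos hδ0]
        gcongr
    _ ≤ ENNReal.ofReal t₀ + ENNReal.ofReal δ⁻¹ := by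
        rw [← ENNReal.ofReal_mul (by positivity)]
        gcongr
        exact (mul_le_of_le_one_left (by positivity) hdecay)
    _ = ENNReal.ofReal (t₀ + δ⁻¹) := (ENNReal.ofReal_add (by positivity) (by positivity)).symm
    _ ≤ ENNReal.ofReal ((1 + Real.log M) / δ + 1) := by
        refine ENNReal.ofReal_le_ofReal ?_
        have := Nat.ceil_lt_add_one (div_nonneg (Real.log_nonneg hM) hδ0.le)
        rw [add_div, one_div]
        linarith

end HittingTime

section StandardMutationRate

lemma exp_neg_one_le_one_sub_inv_pow {n : ℕ} (hn : 1 ≤ n) :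
    Real.exp (-1) ≤ (1 - 1 / (n : ℝ)) ^ (n - 1) := by
  obtain ⟨m, rfl⟩ : ∃ m, n = m + 1 := ⟨n - 1, by omega⟩
  have hprod : ((1 + (m : ℝ)⁻¹) * (1 - 1 / ((m + 1 : ℕ) : ℝ))) ^ m = 1 := by
    rcases m.eq_zero_or_pos with rfl | hm
    · simp
    · rw [show (1 + (m : ℝ)⁻¹) * (1 - 1 / ((m + 1 : ℕ) : ℝ)) = 1 by push_cast; field_simp; ring,
        one_pow]
  have hbase : (0 : ℝ) ≤ 1 - 1 / ((m + 1 : ℕ) : ℝ) :=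
    sub_nonneg.mpr (div_le_one_of_le₀ (by simp) (by positivity))
  rw [Real.exp_neg, inv_le_iff_one_le_mul₀' (Real.exp_pos 1), Nat.add_sub_cancel]
  calc 1 = (1 + (m : ℝ)⁻¹) ^ m * (1 - 1 / ((m + 1 : ℕ) : ℝ)) ^ m := by rw [← mul_pow, hprod]
    _ ≤ Real.exp 1 * (1 - 1 / ((m + 1 : ℕ) : ℝ)) ^ m :=
        mul_le_mul_of_nonneg_right Real.one_add_inv_pow_le_exp (pow_nonneg hbase _)

lemma one_div_two_mul_exp_mul_le {n : ℕ} (hn : 1 ≤ n) :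
    1 / (2 * Real.exp 1 * n) ≤ 1 / n * (1 - 1 / (n : ℝ)) ^ (n - 1) / 2 := by
  have h := exp_neg_one_le_one_sub_inv_pow hn
  rw [Real.exp_neg] at h
  have hn0 : (0 : ℝ) < n := by exact_mod_cast hn
  calc 1 / (2 * Real.exp 1 * n) = 1 / n * (Real.exp 1)⁻¹ / 2 := by field_simp
    _ ≤ 1 / n * (1 - 1 / (n : ℝ)) ^ (n - 1) / 2 := by gcongr

lemma potential_le_mul_exp_two {n k : ℕ} (hkn : k ≤ n) (x : Fin n → Bool) :
    potential k (1 / n) x ≤ k * Real.exp 2 := by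
  have hχ : (0 : ℝ) ≤ 1 / n := by positivity
  calc potential k (1 / n) x ≤ k * (1 + 2 * (1 / n : ℝ)) ^ k := potential_le hχ x
    _ ≤ k * (1 + 2 * (1 / n : ℝ)) ^ n := by gcongr; linarith
    _ ≤ k * Real.exp 2 := by
        have h := Real.one_sub_div_pow_le_exp_neg (n := n) (t := -2)
          (by linarith [n.cast_nonneg (α := ℝ)])
        rw [show (1 : ℝ) - -2 / n = 1 + 2 * (1 / n) by ring, neg_neg] at h
        gcongr

lemma one_add_log_mul_exp_two_div_add_one_le {n k : ℝ} (hn : 1 ≤ n) (hk : 1 ≤ k) :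
    (1 + Real.log (k * Real.exp 2)) / (1 / (2 * Real.exp 1 * n)) + 1 ≤
      4 * Real.exp 1 * n * (1 + Real.log (2 * k)) := by
  rw [Real.log_mul (by positivity) (by positivity), Real.log_exp,
    Real.log_mul (by norm_num) (by positivity)]
  have he := Real.exp_one_gt_d9
  have hlog2 := Real.log_two_gt_d9
  have hlogk : 0 ≤ Real.log k := Real.log_nonneg hk
  have hen : 2.7 ≤ Real.exp 1 * n := by nlinarith
  field_simp
  nlinarith [mul_nonneg (by linarith : 0 ≤ Real.exp 1 * n) hlogk,
    mul_le_mul_of_nonneg_left hlog2.le (by linarith : 0 ≤ Real.exp 1 * n)]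

end StandardMutationRate

theorem ea_standard_fixed_target_upper_general
    (n k : ℕ) (hk2 : 2 ≤ k) (hkn : k ≤ n) :
    hitTimeExp (uniformInit n) (stepKer n (1 / n)) (firstKOnes n k) ≤
      ENNReal.ofReal (4 * Real.exp 1 * n * (1 + Real.log (2 * k))) := by
  have hn : 1 ≤ n := by omega
  have hnR : (1 : ℝ) ≤ n := by exact_mod_cast hn
  have hkR : (2 : ℝ) ≤ k := by exact_mod_cast hk2
  have he := Real.exp_one_gt_d9
  have hχ0 : (0 : ℝ) ≤ 1 / n := by positivity
  have hχ1 : (1 : ℝ) / n ≤ 1 := (div_le_one (by positivity)).mpr hnR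
  have hδ0 : 0 < 1 / (2 * Real.exp 1 * n) := by positivity
  have hδ1 : 1 / (2 * Real.exp 1 * n) ≤ 1 := (div_le_one (by positivity)).mpr (by nlinarith)
  have hM : 1 ≤ (k : ℝ) * Real.exp 2 := by nlinarith [Real.add_one_le_exp 2]
  have hinit : ∑ s, uniformInit n s * ENNReal.ofReal (potential k (1 / n) s) ≤
      ENNReal.ofReal (k * Real.exp 2) := by
    calc _ ≤ ∑ s, uniformInit n s * ENNReal.ofReal (k * Real.exp 2) := by
          gcongr with s
          exact potential_le_mul_exp_two hkn s
      _ = ENNReal.ofReal (k * Real.exp 2) := by rw [← sum_mul, sum_uniformInit, one_mul]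
  have hdrift (s : Fin n → Bool) (_ : s ∉ firstKOnes n k) :
      ∑ s', stepKer n (1 / n) s s' * ENNReal.ofReal (potential k (1 / n) s') ≤
        ENNReal.ofReal (1 - 1 / (2 * Real.exp 1 * n)) * ENNReal.ofReal (potential k (1 / n) s) :=
    (sum_stepKer_mul_potential_le hχ0 hχ1 s).trans (mul_le_mul_left
      (ENNReal.ofReal_le_ofReal (by linarith [one_div_two_mul_exp_mul_le hn])) _)
  calc _ ≤ ENNReal.ofReal ((1 + Real.log (k * Real.exp 2)) / (1 / (2 * Real.exp 1 * n)) + 1) :=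
        hitTimeExp_le_of_multiplicative_drift hδ0 hδ1 hM (sum_uniformInit n).le
          (fun s => (sum_stepKer hχ0 hχ1 s).le)
          (fun s hs => ENNReal.one_le_ofReal.mpr (one_le_potential hχ0 hs)) hinit hdrift
    _ ≤ _ := ENNReal.ofReal_le_ofReal (one_add_log_mul_exp_two_div_add_one_le hnR (by linarith))

/-- Fixed-target upper bound for the standard (1+1) EA with mutation rate `χ = 1/n`
on BinVal (`n ≥ 3`, `2 ≤ k ≤ n`): `E[T_k] ≤ 4e·n·(1 + ln(2k))`,
i.e. `E[T_k] = O(n log k)`. -/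
theorem ea_standard_fixed_target_upper
    (n k : ℕ) (hn : 3 ≤ n) (hk2 : 2 ≤ k) (hkn : k ≤ n) :
    hitTimeExp (uniformInit n) (stepKer n (1 / n)) (firstKOnes n k) ≤
      ENNReal.ofReal (4 * Real.exp 1 * n * (1 + Real.log (2 * k))) :=
  ea_standard_fixed_target_upper_general n k hk2 hkn
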